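/- Let J be twice differentiable with J'' < 0 on [0,1], b₁ < b₂ in [0,1], and a* ∈ (b₁, b₂) with J'(a*) = (J(b₂) - J(b₁))/(b₂ - b₁). Then min over a ∈ [b₁,b₂] of max over p ∈ [b₁,b₂] of d(p‖a) equals d(b₁‖a*) = d(b₂‖a*), where d(p‖a) = -J(p) + J(a) + (p-a)·J'(a). -/

import Mathlib

/-!
With `F = -J` convex, `d(p‖a)` is the Bregman divergence of `F`. It is convex in `p`, so its
maximum over `p ∈ [b₁, b₂]` is attained at an endpoint. Its derivative in `a` is
`(a - p) F''(a)`, so `d(b₁‖·)` increases and `d(b₂‖·)` decreases on `[b₁, b₂]`; the slope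
condition on `a*` says exactly that the two cross at `a*`, which therefore minimizes their maximum.
-/

open Set

def bregmanDiv (F F' : ℝ → ℝ) (p a : ℝ) : ℝ := F p - F a - (p - a) * F' a

section Bregman

variable {F F' F'' : ℝ → ℝ}

theorem bregmanDiv_eq_of_deriv_eq_slope {p q a : ℝ} (hpq : p ≠ q)
    (h : F' a = (F q - F p) / (q - p)) : bregmanDiv F F' p a = bregmanDiv F F' q a := by
  have hqp : q - p ≠ 0 := sub_ne_zero.mpr hpq.symm
  rw [eq_div_iff hqp] at h
  simp only [bregmanDiv]
  linear_combination h

theorem convexOn_bregmanDiv_left {s : Set ℝ} (hF : ConvexOn ℝ s F) (a : ℝ) :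
    ConvexOn ℝ s (fun p => bregmanDiv F F' p a) := by
  refine ⟨hF.1, fun x hx y hy α β hα hβ hαβ => ?_⟩
  have := hF.2 hx hy hα hβ hαβ
  simp only [bregmanDiv, smul_eq_mul] at *
  linear_combination this + (F a + (-a) * F' a) * hαβ

theorem hasDerivAt_bregmanDiv_right {a : ℝ} (hF : HasDerivAt F (F' a) a)
    (hF' : HasDerivAt F' (F'' a) a) (p : ℝ) :
    HasDerivAt (bregmanDiv F F' p) ((a - p) * F'' a) a := by
  have := (hF.const_sub (F p)).sub (((hasDerivAt_id' a).const_sub p).mul hF')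
  exact this.congr_deriv (by ring)

variable {p q : ℝ}

theorem monotoneOn_bregmanDiv_right (hF : ∀ x ∈ Icc p q, HasDerivAt F (F' x) x)
    (hF' : ∀ x ∈ Icc p q, HasDerivAt F' (F'' x) x) (hF'' : ∀ x ∈ Icc p q, 0 ≤ F'' x) :
    MonotoneOn (bregmanDiv F F' p) (Icc p q) := by
  have hD x (hx : x ∈ Icc p q) := hasDerivAt_bregmanDiv_right (hF x hx) (hF' x hx) p
  refine monotoneOn_of_hasDerivWithinAt_nonneg (convex_Icc p q)
    (fun x hx => (hD x hx).continuousAt.continuousWithinAt)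
    (fun x hx => (hD x (interior_subset hx)).hasDerivWithinAt) fun x hx => ?_
  rw [interior_Icc] at hx
  exact mul_nonneg (sub_nonneg.mpr hx.1.le) (hF'' x (Ioo_subset_Icc_self hx))

theorem antitoneOn_bregmanDiv_right (hF : ∀ x ∈ Icc p q, HasDerivAt F (F' x) x)
    (hF' : ∀ x ∈ Icc p q, HasDerivAt F' (F'' x) x) (hF'' : ∀ x ∈ Icc p q, 0 ≤ F'' x) :
    AntitoneOn (bregmanDiv F F' q) (Icc p q) := by
  have hD x (hx : x ∈ Icc p q) := hasDerivAt_bregmanDiv_right (hF x hx) (hF' x hx) q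
  refine antitoneOn_of_hasDerivWithinAt_nonpos (convex_Icc p q)
    (fun x hx => (hD x hx).continuousAt.continuousWithinAt)
    (fun x hx => (hD x (interior_subset hx)).hasDerivWithinAt) fun x hx => ?_
  rw [interior_Icc] at hx
  exact mul_nonpos_of_nonpos_of_nonneg (sub_nonpos.mpr hx.2.le) (hF'' x (Ioo_subset_Icc_self hx))

theorem convexOn_Icc_of_hasDerivAt2_nonneg (hF : ∀ x ∈ Icc p q, HasDerivAt F (F' x) x)
    (hF' : ∀ x ∈ Icc p q, HasDerivAt F' (F'' x) x) (hF'' : ∀ x ∈ Icc p q, 0 ≤ F'' x) :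
    ConvexOn ℝ (Icc p q) F :=
  convexOn_of_hasDerivWithinAt2_nonneg (convex_Icc p q)
    (fun x hx => (hF x hx).continuousAt.continuousWithinAt)
    (fun x hx => (hF x (interior_subset hx)).hasDerivWithinAt)
    (fun x hx => (hF' x (interior_subset hx)).hasDerivWithinAt)
    (fun x hx => hF'' x (interior_subset hx))

end Bregman

theorem ConvexOn.sSup_image_Icc {f : ℝ → ℝ} {a b : ℝ} (hab : a ≤ b)
    (hf : ConvexOn ℝ (Icc a b) f) : sSup (f '' Icc a b) = max (f a) (f b) := by
  have ha : a ∈ Icc a b := left_mem_Icc.mpr hab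
  have hb : b ∈ Icc a b := right_mem_Icc.mpr hab
  refine IsGreatest.csSup_eq ⟨?_, ?_⟩
  · rcases max_choice (f a) (f b) with h | h <;> rw [h]
    exacts [mem_image_of_mem f ha, mem_image_of_mem f hb]
  · rintro _ ⟨z, hz, rfl⟩
    exact hf.le_max_of_mem_Icc ha hb hz

theorem isLeast_image_max_of_monotoneOn_of_antitoneOn {α β : Type*} [LinearOrder α]
    [LinearOrder β] {f g : α → β} {a b c : α} (hc : c ∈ Icc a b) (hf : MonotoneOn f (Icc c b))
    (hg : AntitoneOn g (Icc a c)) (hfg : f c = g c) :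
    IsLeast ((fun x => max (f x) (g x)) '' Icc a b) (f c) := by
  refine ⟨⟨c, hc, by simp [hfg]⟩, ?_⟩
  rintro _ ⟨x, hx, rfl⟩
  rcases le_total c x with hcx | hxc
  · exact le_max_of_le_left (hf ⟨le_rfl, hc.2⟩ ⟨hcx, hx.2⟩ hcx)
  · exact le_max_of_le_right (hfg ▸ hg ⟨hx.1, hxc⟩ ⟨hc.1, le_rfl⟩ hxc)

/-- With `J'' < 0` on `[0,1]`, `b₁ < b₂` in `[0,1]`, and `a* ∈ (b₁,b₂)` with
`J'(a*) = (J(b₂)-J(b₁))/(b₂-b₁)`, the minimax value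
`min_{a ∈ [b₁,b₂]} max_{p ∈ [b₁,b₂]} d(p‖a)` equals `d(b₁‖a*) = d(b₂‖a*)`. -/
theorem minimax_value_equals_endpoint_divergence
    (J J' J'' : ℝ → ℝ)
    (hJ : ∀ x ∈ Set.Icc (0:ℝ) 1, HasDerivAt J (J' x) x)
    (hJ' : ∀ x ∈ Set.Icc (0:ℝ) 1, HasDerivAt J' (J'' x) x)
    (hJ'' : ∀ x ∈ Set.Icc (0:ℝ) 1, J'' x < 0)
    (b₁ b₂ : ℝ) (hb₁ : b₁ ∈ Set.Icc (0:ℝ) 1) (hb₂ : b₂ ∈ Set.Icc (0:ℝ) 1)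
    (hlt : b₁ < b₂)
    (d : ℝ → ℝ → ℝ)
    (hd : ∀ p a, d p a = -J p + J a + (p - a) * J' a)
    (astar : ℝ) (hastar : astar ∈ Set.Ioo b₁ b₂)
    (hslope : J' astar = (J b₂ - J b₁) / (b₂ - b₁)) :
    d b₁ astar = d b₂ astar ∧
      sInf {x : ℝ | ∃ a ∈ Set.Icc b₁ b₂,
          x = sSup ((fun p => d p a) '' Set.Icc b₁ b₂)} = d b₁ astar := by
  obtain rfl : d = bregmanDiv (-J) (-J') := by
    funext p a; rw [hd, bregmanDiv, Pi.neg_apply, Pi.neg_apply, Pi.neg_apply]; ring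
  have hsub : Icc b₁ b₂ ⊆ Icc 0 1 := Icc_subset_Icc hb₁.1 hb₂.2
  have hF x (hx : x ∈ Icc b₁ b₂) : HasDerivAt (-J) ((-J') x) x := (hJ x (hsub hx)).neg
  have hF' x (hx : x ∈ Icc b₁ b₂) : HasDerivAt (-J') ((-J'') x) x := (hJ' x (hsub hx)).neg
  have hF'' x (hx : x ∈ Icc b₁ b₂) : 0 ≤ (-J'') x := neg_nonneg.mpr (hJ'' x (hsub hx)).le
  have heq : bregmanDiv (-J) (-J') b₁ astar = bregmanDiv (-J) (-J') b₂ astar :=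
    bregmanDiv_eq_of_deriv_eq_slope hlt.ne (by simp only [Pi.neg_apply, hslope]; ring)
  have hmax a : sSup ((fun p => bregmanDiv (-J) (-J') p a) '' Icc b₁ b₂) =
      max (bregmanDiv (-J) (-J') b₁ a) (bregmanDiv (-J) (-J') b₂ a) :=
    (convexOn_bregmanDiv_left (convexOn_Icc_of_hasDerivAt2_nonneg hF hF' hF'') a).sSup_image_Icc
      hlt.le
  refine ⟨heq, IsLeast.csInf_eq ?_⟩
  have hastar' : astar ∈ Icc b₁ b₂ := Ioo_subset_Icc_self hastar
  convert isLeast_image_max_of_monotoneOn_of_antitoneOn hastar'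
    ((monotoneOn_bregmanDiv_right hF hF' hF'').mono (Icc_subset_Icc_left hastar'.1))
    ((antitoneOn_bregmanDiv_right hF hF' hF'').mono (Icc_subset_Icc_right hastar'.2)) heq using 1
  ext x
  simp only [hmax, mem_ofPred_eq, mem_image, eq_comm]
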